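/- arXiv:1109.3169 — 2 statements merged into one kernel-verified Lean document; each statement's English description precedes it below -/
import Mathlib

section
/- Let n ≥ 3 be an odd natural number, l ∈ ℕ with 2l + 1 ≤ n, ε ∈ {1, −1}, and j ∈ ℕ. Set J = n/2 + j. Then Z_ε((2l+1)/2; j) = ε · ( J · ∏_{a=1}^{l} (J² − a²) ) / ( (n/2) · ∏_{a=1}^{l} ((n/2)² − a²) ). In particular Z_ε((2l+1)/2; j) is a nonzero constant multiple, independent of j and ε, of ε · J(J² − 1²)···(J² − l²), the eigenvalue of D_{2l+1} = D̸(D̸² − 1²)···(D̸² − l²) on 𝒱_ε(j). -/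
/-!
With `J = n/2 + j` and `r = l + 1/2`, the four Gamma arguments of `Z_ε(r; j)` are `J + l + 1`,
`n/2 - l`, `J - l` and `n/2 + l + 1`. Since `l < n/2 ≤ J`, the recursion `Γ(x + 1) = x Γ(x)`
gives `Γ(x + l + 1) = (x - l)(x - l + 1)⋯(x + l) Γ(x - l)` for `x ∈ {J, n/2}`, and the product of
these `2l + 1` consecutive factors centred at `x` is `x ∏_{a=1}^{l} (x² - a²)`. The Gamma values
`Γ(J - l)`, `Γ(n/2 - l)` cancel, and the normalising constant is positive as a ratio of
Gamma values at positive arguments.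
-/

/-- Case I spectral function on the spinor bundle over the odd sphere `Sⁿ`. -/
noncomputable def Zspec (n : ℕ) (ε r : ℝ) (j : ℕ) : ℝ :=
  ε * (Real.Gamma ((n : ℝ) / 2 + j + 1 / 2 + r) * Real.Gamma ((n : ℝ) / 2 + 1 / 2 - r)) /
    (Real.Gamma ((n : ℝ) / 2 + j + 1 / 2 - r) * Real.Gamma ((n : ℝ) / 2 + 1 / 2 + r))

open Finset

theorem prod_range_two_mul_add_one_sub_add {R : Type*} [CommRing R] (x : R) (l : ℕ) :
    ∏ k ∈ range (2 * l + 1), (x - l + k) = x * ∏ a ∈ Icc 1 l, (x ^ 2 - (a : R) ^ 2) := by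
  induction l with
  | zero => simp
  | succ l ih =>
    have hshift : ∀ k : ℕ, x - ((l + 1 : ℕ) : R) + ((k + 1 : ℕ) : R) = x - l + k := by
      intro k; push_cast; ring
    rw [show 2 * (l + 1) + 1 = 2 * l + 1 + 1 + 1 by ring, prod_range_succ, prod_range_succ',
      funext hshift, ih, prod_Icc_succ_top (Nat.le_add_left 1 l)]
    push_cast
    ring

theorem Real.Gamma_add_nat_eq_prod_mul {x : ℝ} (hx : ∀ k : ℕ, x ≠ -k) (m : ℕ) :
    Real.Gamma (x + m) = (∏ k ∈ range m, (x + k)) * Real.Gamma x := by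
  induction m with
  | zero => simp
  | succ m ih =>
    have hne : x + m ≠ 0 := fun h => hx m (eq_neg_of_add_eq_zero_left h)
    rw [Nat.cast_succ, ← add_assoc, Real.Gamma_add_one hne, ih, prod_range_succ]
    ring

theorem Real.Gamma_add_add_one_eq_mul_prod_mul_Gamma_sub {x : ℝ} (l : ℕ) (hlx : (l : ℝ) < x) :
    Real.Gamma (x + l + 1) =
      (x * ∏ a ∈ Icc 1 l, (x ^ 2 - (a : ℝ) ^ 2)) * Real.Gamma (x - l) := by
  have hx : ∀ k : ℕ, x - l ≠ -k := fun k h => by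
    have : (0 : ℝ) ≤ k := k.cast_nonneg
    linarith
  rw [← prod_range_two_mul_add_one_sub_add, ← Real.Gamma_add_nat_eq_prod_mul hx]
  push_cast
  ring_nf

theorem mul_prod_sq_sub_sq_pos {x : ℝ} (l : ℕ) (hlx : (l : ℝ) < x) :
    0 < x * ∏ a ∈ Icc 1 l, (x ^ 2 - (a : ℝ) ^ 2) := by
  have hΓ := Real.Gamma_add_add_one_eq_mul_prod_mul_Gamma_sub l hlx
  have hpos : 0 < Real.Gamma (x + l + 1) := Real.Gamma_pos_of_pos (by linarith)
  rw [hΓ] at hpos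
  exact pos_of_mul_pos_left hpos (Real.Gamma_pos_of_pos (by linarith)).le

theorem Zspec_odd_order_general (n l : ℕ) (hl : 2 * l + 1 ≤ n)
    (ε : ℝ) (j : ℕ) :
    Zspec n ε ((2 * (l : ℝ) + 1) / 2) j =
      ε * (((n : ℝ) / 2 + j) * ∏ a ∈ Finset.Icc 1 l, (((n : ℝ) / 2 + j) ^ 2 - (a : ℝ) ^ 2)) /
        (((n : ℝ) / 2) * ∏ a ∈ Finset.Icc 1 l, (((n : ℝ) / 2) ^ 2 - (a : ℝ) ^ 2)) ∧
    ((n : ℝ) / 2) * ∏ a ∈ Finset.Icc 1 l, (((n : ℝ) / 2) ^ 2 - (a : ℝ) ^ 2) ≠ 0 := by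
  set m : ℝ := (n : ℝ) / 2 with hm
  have hlm : (l : ℝ) < m := by
    have : (2 * l + 1 : ℝ) ≤ n := by exact_mod_cast hl
    linarith
  have hlJ : (l : ℝ) < m + j := by linarith [(j.cast_nonneg : (0 : ℝ) ≤ j)]
  have hcm := (mul_prod_sq_sub_sq_pos l hlm).ne'
  refine ⟨?_, hcm⟩
  have hΓm := (Real.Gamma_pos_of_pos (sub_pos.2 hlm)).ne'
  have hΓJ := (Real.Gamma_pos_of_pos (sub_pos.2 hlJ)).ne'
  unfold Zspec
  rw [show m + j + 1 / 2 + (2 * (l : ℝ) + 1) / 2 = m + j + l + 1 by ring,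
    show m + 1 / 2 - (2 * (l : ℝ) + 1) / 2 = m - l by ring,
    show m + j + 1 / 2 - (2 * (l : ℝ) + 1) / 2 = m + j - l by ring,
    show m + 1 / 2 + (2 * (l : ℝ) + 1) / 2 = m + l + 1 by ring,
    Real.Gamma_add_add_one_eq_mul_prod_mul_Gamma_sub l hlJ,
    Real.Gamma_add_add_one_eq_mul_prod_mul_Gamma_sub l hlm]
  field_simp

/-- At half-odd-integer order `2r = 2l + 1` with `2l + 1 ≤ n`, the spectral function equals
`ε · (J ∏_{a=1}^{l}(J² − a²)) / ((n/2) ∏_{a=1}^{l}((n/2)² − a²))` with `J = n/2 + j`;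
the normalizing constant (the denominator) is nonzero and independent of `j` and `ε`, so
`Z_ε((2l+1)/2; j)` is a nonzero constant multiple of the eigenvalue
`ε · J(J²−1²)···(J²−l²)` of `D_{2l+1}` on `𝒱_ε(j)`. -/
theorem Zspec_odd_order (n l : ℕ) (hn : Odd n) (hn3 : 3 ≤ n) (hl : 2 * l + 1 ≤ n)
    (ε : ℝ) (hε : ε = 1 ∨ ε = -1) (j : ℕ) :
    Zspec n ε ((2 * (l : ℝ) + 1) / 2) j =
      ε * (((n : ℝ) / 2 + j) * ∏ a ∈ Finset.Icc 1 l, (((n : ℝ) / 2 + j) ^ 2 - (a : ℝ) ^ 2)) /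
        (((n : ℝ) / 2) * ∏ a ∈ Finset.Icc 1 l, (((n : ℝ) / 2) ^ 2 - (a : ℝ) ^ 2)) ∧
    ((n : ℝ) / 2) * ∏ a ∈ Finset.Icc 1 l, (((n : ℝ) / 2) ^ 2 - (a : ℝ) ^ 2) ≠ 0 :=
  Zspec_odd_order_general n l hl ε j
end

section
/- Let n ≥ 3 be an odd natural number, k ∈ ℕ with 1 ≤ k ≤ (n−1)/2, and l ∈ ℕ with l ≥ 1. Set a_l = −16kl² / ((n − 2k + 2)(n − 2k + 2 − 2l)(n − 2k + 2 + 2l)). Then for every real number L: ((n − 2k)/(n − 2k + 2))² · L² − l² + a_l · (n − 2k + 1)(L² − ((n − 2k + 2)/2)²) / (k(n − 2k + 2)) = ((n − 2k − 2l)(n − 2k + 2l) / ((n − 2k + 2 − 2l)(n − 2k + 2 + 2l))) · (L² − l²). -/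
/-!
With `d = n − 2k`, both sides are rational functions of `d, k, l, L` whose denominators are
`k`, `d + 2` and `d + 2 ± 2l`; once these are nonzero the identity is a polynomial identity.
For odd `n` the last three are odd integers, hence nonzero.
-/

theorem Odd.natCast_ne_two_mul_intCast {R : Type*} [Ring R] [CharZero R] {n : ℕ} (hn : Odd n)
    (a : ℤ) : (n : R) ≠ 2 * a := by
  obtain ⟨m, rfl⟩ := hn
  intro h
  have : (2 * m + 1 : ℤ) = 2 * a := by exact_mod_cast h
  omega

theorem Akl_eigenvalue_identity {K : Type*} [Field K] [NeZero (2 : K)] (d k l L : K) (hk : k ≠ 0)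
    (hd : d + 2 ≠ 0) (hdm : d + 2 - 2 * l ≠ 0) (hdp : d + 2 + 2 * l ≠ 0) :
    ((d / (d + 2)) ^ 2 * L ^ 2 - l ^ 2) +
      (-16 * k * l ^ 2 / ((d + 2) * (d + 2 - 2 * l) * (d + 2 + 2 * l))) *
        ((d + 1) * (L ^ 2 - ((d + 2) / 2) ^ 2) / (k * (d + 2))) =
    ((d - 2 * l) * (d + 2 * l) / ((d + 2 - 2 * l) * (d + 2 + 2 * l))) * (L ^ 2 - l ^ 2) := by
  field_simp
  ring

theorem Akl_eigenvalue_general (n k l : ℕ) (hn : Odd n)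
    (hk1 : 1 ≤ k) (L : ℝ) :
    ((((n : ℝ) - 2 * k) / ((n : ℝ) - 2 * k + 2)) ^ 2 * L ^ 2 - (l : ℝ) ^ 2) +
      (-16 * k * (l : ℝ) ^ 2 /
          (((n : ℝ) - 2 * k + 2) * ((n : ℝ) - 2 * k + 2 - 2 * l) *
            ((n : ℝ) - 2 * k + 2 + 2 * l))) *
        (((n : ℝ) - 2 * k + 1) * (L ^ 2 - (((n : ℝ) - 2 * k + 2) / 2) ^ 2) /
          ((k : ℝ) * ((n : ℝ) - 2 * k + 2))) =
    ((((n : ℝ) - 2 * k - 2 * l) * ((n : ℝ) - 2 * k + 2 * l)) /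
        ((((n : ℝ) - 2 * k + 2 - 2 * l)) * (((n : ℝ) - 2 * k + 2 + 2 * l)))) *
      (L ^ 2 - (l : ℝ) ^ 2) := by
  have hk : (k : ℝ) ≠ 0 := Nat.cast_ne_zero.mpr (by omega)
  refine Akl_eigenvalue_identity _ _ _ _ hk ?_ ?_ ?_ <;> intro h
  · exact hn.natCast_ne_two_mul_intCast (k - 1) (by push_cast; linear_combination h)
  · exact hn.natCast_ne_two_mul_intCast (k - 1 + l) (by push_cast; linear_combination h)
  · exact hn.natCast_ne_two_mul_intCast (k - 1 - l) (by push_cast; linear_combination h)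

/-- The eigenvalue computation for `A_{k,l} = A_{k,0}² − l²·Id + a_l·T_{k−1}T*_{k−1}` on
the summand `𝒱_ε(j, 0)` of the bundle `𝕋ᵏ` over the odd sphere `Sⁿ`, with
`a_l = −16kl²/((n−2k+2)(n−2k+2−2l)(n−2k+2+2l))`. -/
theorem Akl_eigenvalue (n k l : ℕ) (hn : Odd n) (hn3 : 3 ≤ n)
    (hk1 : 1 ≤ k) (hk2 : k ≤ (n - 1) / 2) (hl : 1 ≤ l) (L : ℝ) :
    ((((n : ℝ) - 2 * k) / ((n : ℝ) - 2 * k + 2)) ^ 2 * L ^ 2 - (l : ℝ) ^ 2) +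
      (-16 * k * (l : ℝ) ^ 2 /
          (((n : ℝ) - 2 * k + 2) * ((n : ℝ) - 2 * k + 2 - 2 * l) *
            ((n : ℝ) - 2 * k + 2 + 2 * l))) *
        (((n : ℝ) - 2 * k + 1) * (L ^ 2 - (((n : ℝ) - 2 * k + 2) / 2) ^ 2) /
          ((k : ℝ) * ((n : ℝ) - 2 * k + 2))) =
    ((((n : ℝ) - 2 * k - 2 * l) * ((n : ℝ) - 2 * k + 2 * l)) /
        ((((n : ℝ) - 2 * k + 2 - 2 * l)) * (((n : ℝ) - 2 * k + 2 + 2 * l)))) *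
      (L ^ 2 - (l : ℝ) ^ 2) :=
  Akl_eigenvalue_general n k l hn hk1 L
end
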